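/- arXiv:2302.13686 — 2 statements merged into one kernel-verified Lean document; each statement's English description precedes it below -/
import Mathlib

section
/- Let I = {0,1} and let A be the affine Cartan matrix of type A_2^{(2)} (with node 0 long and node 1 short): a_{00} = a_{11} = 2, a_{01} = -1, a_{10} = -4; set q_0 = p^4 and q_1 = p. Define z_1 = x_0^{-1} x_1^2 (so that y_0 = z_1^{-2} and y_1 = z_1). Then the pair φ_0 = {ı·p^{-3}·z_1}_0·{ı·p^{-1}·z_1}_0 and φ_1 = (ı/(p − p^{-1}))·{ı·p·z_1}_1 satisfies the shiftability system for A. -/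
noncomputable section

/-- The Laurent polynomial algebra `ℂ[x_i^{±1} : i ∈ ι]`, realized as the group algebra of the
free abelian group `ι → ℤ` over `ℂ` (for `ι` finite this is `ℤ^ι`). -/
abbrev LaurentAlg (ι : Type*) : Type _ := AddMonoidAlgebra ℂ (ι → ℤ)

/-- The monomial `∏_i x_i^{μ i}`. -/
def mono {ι : Type*} (μ : ι → ℤ) : LaurentAlg ι := AddMonoidAlgebra.single μ 1

lemma mono_zero {ι : Type*} : mono (0 : ι → ℤ) = 1 := rfl

lemma mono_add {ι : Type*} (μ ν : ι → ℤ) : mono (μ + ν) = mono μ * mono ν := by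
  simp [mono, AddMonoidAlgebra.single_mul_single]

/-- The auxiliary monoid homomorphism `μ ↦ c^{-μ i} · x^μ` underlying `ζ_i`. -/
def zetaHom {ι : Type*} (c : ℂˣ) (i : ι) : Multiplicative (ι → ℤ) →* LaurentAlg ι where
  toFun μ := ((c ^ (-(Multiplicative.toAdd μ i)) : ℂˣ) : ℂ) • mono (Multiplicative.toAdd μ)
  map_one' := by
    simp [mono_zero]
  map_mul' μ ν := by
    show ((c ^ (-(Multiplicative.toAdd (μ * ν) i)) : ℂˣ) : ℂ) • mono (Multiplicative.toAdd (μ * ν)) = _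
    have h : Multiplicative.toAdd (μ * ν) = Multiplicative.toAdd μ + Multiplicative.toAdd ν := rfl
    rw [h, mono_add, Pi.add_apply, neg_add, zpow_add, Units.val_mul, mul_smul,
      smul_mul_assoc, mul_smul_comm]

/-- The `ℂ`-algebra endomorphism `ζ_i` of the Laurent polynomial algebra determined by
`ζ_i(x_j) = c^{-δ_{ij}} x_j` (its inverse automorphism is `zeta c⁻¹ i`). -/
def zeta {ι : Type*} (c : ℂˣ) (i : ι) : LaurentAlg ι →ₐ[ℂ] LaurentAlg ι :=
  AddMonoidAlgebra.lift ℂ (LaurentAlg ι) (ι → ℤ) (zetaHom c i)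

/-- The element `{u}_s = (u - u⁻¹)/(s - s⁻¹)` for the unit `u = c · x^μ` of the Laurent
polynomial algebra (whose inverse is `c⁻¹ · x^{-μ}`). -/
def brk {ι : Type*} (s c : ℂ) (μ : ι → ℤ) : LaurentAlg ι :=
  ((s - s⁻¹)⁻¹ : ℂ) • (c • mono μ - c⁻¹ • mono (-μ))

/-- The shiftability system (4.1) for the integer matrix `a` with parameters `q i`:
`ζ_i(φ_i) − φ_i = {y_i}_i` for all `i`, and `φ_i φ_j = ζ_j^{-1}(φ_i)·ζ_i^{-1}(φ_j)` for `i ≠ j`,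
where `y_i = ∏_j x_j^{a j i}`. -/
def ShiftSystem {ι : Type*} (a : ι → ι → ℤ) (q : ι → ℂˣ) (φ : ι → LaurentAlg ι) : Prop :=
  (∀ i, zeta (q i) i (φ i) - φ i = brk ((q i : ℂ)) 1 (fun j => a j i)) ∧
  (∀ i j, i ≠ j → φ i * φ j = zeta (q j)⁻¹ j (φ i) * zeta (q i)⁻¹ i (φ j))

/-- The exponent vector of the single variable `x_k`. -/
def xvec {ι : Type*} [DecidableEq ι] (k : ι) : ι → ℤ := fun j => if j = k then 1 else 0

end

/-!
All the elements involved are Laurent polynomials in the single monomial `z = x^μ`,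
`μ = 2 e₁ - e₀`, and `ζ_i` rescales `z` by `q_i^{-μ i}`: `ζ₀ z = p⁴ z`, `ζ₁ z = p⁻² z`.
Since `ı c z - (ı c z)⁻¹ = ı (c z + (c z)⁻¹)`, both `φ₀` and `φ₁` are scalar multiples of
products of the symmetric elements `c z + (c z)⁻¹`, and `ζ` only rescales their parameters `c`.
Then `ζ₀` takes the parameters `(p⁻³, p⁻¹)` of `φ₀` to `(p, p³)`, which changes only the
coefficients of `z^{±2}`; `ζ₁` inverts the parameter `p` of `φ₁`; and the commutation relation
holds because `ζ₁⁻¹` and `ζ₀⁻¹` merely permute the three parameters `p⁻³, p⁻¹, p` of `φ₀ φ₁`.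
-/

noncomputable section

open Complex

variable {ι : Type*}

lemma inv_sq_mul_self {G₀ : Type*} [GroupWithZero G₀] (x : G₀) : x⁻¹ ^ 2 * x = x⁻¹ := by
  simpa [sq] using mul_self_mul_inv x⁻¹

def monoAddInv (c : ℂ) (μ : ι → ℤ) : LaurentAlg ι := c • mono μ + c⁻¹ • mono (-μ)

lemma zeta_mono (c : ℂˣ) (i : ι) (μ : ι → ℤ) :
    zeta c i (mono μ) = ((c : ℂ) ^ (-μ i)) • mono μ := by
  simp [zeta, mono, AddMonoidAlgebra.lift_single, zetaHom, Units.val_zpow_eq_zpow_val]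

lemma zeta_monoAddInv (c : ℂˣ) (i : ι) (d : ℂ) (μ : ι → ℤ) :
    zeta c i (monoAddInv d μ) = monoAddInv ((c : ℂ) ^ (-μ i) * d) μ := by
  simp only [monoAddInv, map_add, map_smul, zeta_mono, Pi.neg_apply, neg_neg, smul_smul, mul_inv,
    zpow_neg, inv_inv]
  match_scalars <;> ring

lemma brk_one (s : ℂ) (μ : ι → ℤ) : brk s 1 μ = (s - s⁻¹)⁻¹ • (mono μ - mono (-μ)) := by
  simp [brk]

lemma brk_I_mul (s : ℂ) {c : ℂ} (hc : c ≠ 0) (μ : ι → ℤ) :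
    brk s (I * c) μ = (I * (s - s⁻¹)⁻¹) • monoAddInv c μ := by
  simp only [brk, monoAddInv, mul_inv, inv_I, smul_sub, smul_add, smul_smul]
  match_scalars <;> field_simp

lemma monoAddInv_inv_sub (d : ℂ) (μ : ι → ℤ) :
    monoAddInv d⁻¹ μ - monoAddInv d μ = -((d - d⁻¹) • (mono μ - mono (-μ))) := by
  simp only [monoAddInv, inv_inv]
  match_scalars <;> ring

/-- The constant term `(a b⁻¹ + a⁻¹ b) • 1` of the product is invariant under `a, b ↦ s a, s b`. -/
lemma monoAddInv_mul_sub_of_mul_eq_one {a b s : ℂ} (habs : a * b * s = 1) (μ : ι → ℤ) :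
    monoAddInv (s * a) μ * monoAddInv (s * b) μ - monoAddInv a μ * monoAddInv b μ =
      (s - s⁻¹) • (mono (μ + μ) - mono (-(μ + μ))) := by
  have ha : a ≠ 0 := left_ne_zero_of_mul (left_ne_zero_of_mul_eq_one habs)
  have hb : b ≠ 0 := right_ne_zero_of_mul (left_ne_zero_of_mul_eq_one habs)
  have hs : s ≠ 0 := right_ne_zero_of_mul_eq_one habs
  simp only [monoAddInv, add_mul, mul_add, smul_mul_smul, ← mono_add, add_neg_cancel,
    neg_add_cancel, neg_add]
  match_scalars
  · field_simp
    linear_combination (s ^ 2 - 1) * habs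
  · field_simp
    ring
  · field_simp
    linear_combination (s ^ 2 - 1) * habs

section A22

variable (p : ℂˣ) (μ : ι → ℤ)

def phiLong : LaurentAlg ι :=
  brk ((p : ℂ) ^ 4) (I * (p : ℂ)⁻¹ ^ 3) μ * brk ((p : ℂ) ^ 4) (I * (p : ℂ)⁻¹) μ

def phiShort : LaurentAlg ι :=
  (I * ((p : ℂ) - (p : ℂ)⁻¹)⁻¹) • brk (p : ℂ) (I * (p : ℂ)) μ

lemma phiLong_eq : phiLong p μ = -((p : ℂ) ^ 4 - ((p : ℂ) ^ 4)⁻¹)⁻¹ ^ 2 •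
    (monoAddInv ((p : ℂ)⁻¹ ^ 3) μ * monoAddInv (p : ℂ)⁻¹ μ) := by
  rw [phiLong, brk_I_mul _ (by simp), brk_I_mul _ (by simp), smul_mul_smul]
  congr 1
  linear_combination (((p : ℂ) ^ 4 - ((p : ℂ) ^ 4)⁻¹)⁻¹ ^ 2) * I_sq

lemma phiShort_eq : phiShort p μ = -((p : ℂ) - (p : ℂ)⁻¹)⁻¹ ^ 2 • monoAddInv (p : ℂ) μ := by
  rw [phiShort, brk_I_mul _ p.ne_zero, smul_smul]
  congr 1
  linear_combination (((p : ℂ) - (p : ℂ)⁻¹)⁻¹ ^ 2) * I_sq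

lemma zeta_phiLong_sub {i : ι} (hμ : μ i = -1) :
    zeta (p ^ 4) i (phiLong p μ) - phiLong p μ = brk ((p : ℂ) ^ 4) 1 (-(μ + μ)) := by
  have habs : (p : ℂ)⁻¹ ^ 3 * (p : ℂ)⁻¹ * (p : ℂ) ^ 4 = 1 := by field_simp
  rw [phiLong_eq, map_smul, map_mul, zeta_monoAddInv, zeta_monoAddInv, hμ, neg_neg, zpow_one,
    Units.val_pow_eq_pow_val, ← smul_sub, monoAddInv_mul_sub_of_mul_eq_one habs, brk_one,
    neg_neg, smul_smul, ← neg_sub (mono (μ + μ)), smul_neg, ← neg_smul, neg_mul, inv_sq_mul_self]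

lemma zeta_phiShort_sub {j : ι} (hμ : μ j = 2) :
    zeta p j (phiShort p μ) - phiShort p μ = brk (p : ℂ) 1 μ := by
  have hshift : (p : ℂ) ^ (-2 : ℤ) * p = (p : ℂ)⁻¹ := by
    rw [zpow_neg, zpow_two]
    field_simp
  rw [phiShort_eq, map_smul, zeta_monoAddInv, hμ, hshift, ← smul_sub, monoAddInv_inv_sub,
    smul_neg, neg_smul, neg_neg, smul_smul, inv_sq_mul_self, brk_one]

lemma phiLong_mul_phiShort {i j : ι} (hi : μ i = -1) (hj : μ j = 2) :
    phiLong p μ * phiShort p μ = zeta p⁻¹ j (phiLong p μ) * zeta (p ^ 4)⁻¹ i (phiShort p μ) := by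
  rw [phiLong_eq, phiShort_eq, map_smul, map_smul, map_mul, zeta_monoAddInv, zeta_monoAddInv,
    zeta_monoAddInv, hi, hj]
  have h₁ : ((p⁻¹ : ℂˣ) : ℂ) ^ (-2 : ℤ) * (p : ℂ)⁻¹ ^ 3 = (p : ℂ)⁻¹ := by
    push_cast
    field_simp
  have h₂ : ((p⁻¹ : ℂˣ) : ℂ) ^ (-2 : ℤ) * (p : ℂ)⁻¹ = p := by
    push_cast
    field_simp
  have h₃ : (((p ^ 4)⁻¹ : ℂˣ) : ℂ) ^ (- -1 : ℤ) * p = (p : ℂ)⁻¹ ^ 3 := by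
    push_cast
    field_simp
  rw [h₁, h₂, h₃, smul_mul_smul_comm, smul_mul_smul_comm]
  congr 1
  ring

end A22

theorem shiftability_A22_aff_general (p : ℂˣ) :
    ShiftSystem
      (fun i j : Fin 2 => if i = j then 2 else if i = 0 then -1 else -4)
      (fun i : Fin 2 => if i = 0 then p ^ 4 else p)
      ![brk ((p : ℂ) ^ 4) (Complex.I * (p : ℂ)⁻¹ ^ 3) (xvec 1 + xvec 1 - xvec 0) *
          brk ((p : ℂ) ^ 4) (Complex.I * (p : ℂ)⁻¹) (xvec 1 + xvec 1 - xvec 0),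
        (Complex.I * ((p : ℂ) - (p : ℂ)⁻¹)⁻¹) •
          brk (p : ℂ) (Complex.I * (p : ℂ)) (xvec 1 + xvec 1 - xvec 0)] := by
  set μ : Fin 2 → ℤ := xvec 1 + xvec 1 - xvec 0
  have hμ₀ : μ 0 = -1 := by simp [μ, xvec]
  have hμ₁ : μ 1 = 2 := by simp [μ, xvec]
  change ShiftSystem _ _ ![phiLong p μ, phiShort p μ]
  refine ⟨fun i => ?_, fun i j hij => ?_⟩
  · fin_cases i
    · have hcol : (fun j : Fin 2 => if j = 0 then (2 : ℤ) else if j = 0 then -1 else -4) =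
          -(μ + μ) := by
        funext j; fin_cases j <;> simp [μ, xvec]
      simpa [hcol] using zeta_phiLong_sub p μ hμ₀
    · have hcol : (fun j : Fin 2 => if j = 1 then (2 : ℤ) else if j = 0 then -1 else -4) = μ := by
        funext j; fin_cases j <;> simp [μ, xvec]
      simpa [hcol] using zeta_phiShort_sub p μ hμ₁
  · fin_cases i <;> fin_cases j
    · exact absurd rfl hij
    · simpa using phiLong_mul_phiShort p μ hμ₀ hμ₁
    · simpa [mul_comm] using phiLong_mul_phiShort p μ hμ₀ hμ₁
    · exact absurd rfl hij

/-- For the affine Cartan matrix of type `A_2^{(2)}` (indexed by `Fin 2`,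
node `0` long, node `1` short, `a_{01} = -1`, `a_{10} = -4`, `q_0 = p⁴`, `q_1 = p`),
with `z_1 = x_0⁻¹x_1²`, the pair `φ_0 = {ı p⁻³ z_1}_0·{ı p⁻¹ z_1}_0`,
`φ_1 = (ı/(p−p⁻¹))·{ı p z_1}_1` solves the shiftability system. -/
theorem shiftability_A22_aff (p : ℂˣ) (hp : ∀ m : ℕ, 0 < m → p ^ m ≠ 1) :
    ShiftSystem
      (fun i j : Fin 2 => if i = j then 2 else if i = 0 then -1 else -4)
      (fun i : Fin 2 => if i = 0 then p ^ 4 else p)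
      ![brk ((p : ℂ) ^ 4) (Complex.I * (p : ℂ)⁻¹ ^ 3) (xvec 1 + xvec 1 - xvec 0) *
          brk ((p : ℂ) ^ 4) (Complex.I * (p : ℂ)⁻¹) (xvec 1 + xvec 1 - xvec 0),
        (Complex.I * ((p : ℂ) - (p : ℂ)⁻¹)⁻¹) •
          brk (p : ℂ) (Complex.I * (p : ℂ)) (xvec 1 + xvec 1 - xvec 0)] :=
  shiftability_A22_aff_general p

end
end

section
/- Let A = (a_{ij})_{i,j∈I} be a generalized Cartan matrix (a_{ii} = 2, a_{ij} ∈ ℤ_{≤0} for i ≠ j, and a_{ij} = 0 if and only if a_{ji} = 0), let i ≠ j in I with a_{ij} = 0, and suppose q_i, q_j ∈ ℂ^× are not roots of unity. Suppose φ_i = β_i^+ y_i + φ_{i,0} + β_i^- y_i^{-1} with φ_{i,0} ∈ 𝒜_{x_i} and φ_j = β_j^+ y_j + φ_{j,0} + β_j^- y_j^{-1} with φ_{j,0} ∈ 𝒜_{x_j}, where β_k^± = −q_k^{±1}·(q_k − q_k^{-1})^{-2}, and suppose φ_i φ_j = ζ_j^{-1}(φ_i)·ζ_i^{-1}(φ_j).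 Then both φ_{i,0} and φ_{j,0} lie in 𝒜_{x_i} ∩ 𝒜_{x_j}. -/
noncomputable section

/-- The decomposition `β_k⁺·y_k + φ_0 + β_k⁻·y_k⁻¹` of Lemma A.1,
with `β_k^± = −q_k^{±1}(q_k − q_k⁻¹)⁻²`. -/
def phiDecomp {ι : Type*} (a : ι → ι → ℤ) (q : ℂˣ) (k : ι) (φ₀ : LaurentAlg ι) :
    LaurentAlg ι :=
  (-(q : ℂ) * (((q : ℂ) - (q : ℂ)⁻¹) ^ 2)⁻¹) • mono (fun l => a l k) + φ₀ +
    (-(q : ℂ)⁻¹ * (((q : ℂ) - (q : ℂ)⁻¹) ^ 2)⁻¹) • mono (-(fun l => a l k))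

open AddMonoidAlgebra

theorem UniqueAdd.of_deg_lt_of_deg_le {M N : Type*} [AddMonoid M] [IsLeftCancelAdd M]
    [AddCommMonoid N] [LinearOrder N] [IsOrderedCancelAddMonoid N] (deg : M →+ N)
    {A B : Finset M} {a₀ b₀ : M} (hA : ∀ a ∈ A, a ≠ a₀ → deg a < deg a₀)
    (hB : ∀ b ∈ B, deg b ≤ deg b₀) : UniqueAdd A B a₀ b₀ := by
  intro a b ha hb hab
  by_cases h : a = a₀
  · subst h
    exact ⟨rfl, add_left_cancel hab⟩
  · have := congrArg deg hab
    rw [map_add, map_add] at this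
    exact absurd this (add_lt_add_of_lt_of_le (hA a ha h) (hB b hb)).ne

lemma ne_neg_of_apply_ne_zero {ι : Type*} {μ : ι → ℤ} {k : ι} (h : μ k ≠ 0) : μ ≠ -μ :=
  fun hμ ↦ h (by have := congrFun hμ k; simp only [Pi.neg_apply] at this; omega)

lemma sub_inv_ne_zero_of_not_isOfFinOrder {q : ℂˣ} (hq : ¬IsOfFinOrder q) :
    (q : ℂ) - (q : ℂ)⁻¹ ≠ 0 := by
  intro h
  refine hq (isOfFinOrder_iff_pow_eq_one.mpr ⟨2, two_pos, Units.ext ?_⟩)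
  have hq0 := q.ne_zero
  push_cast
  field_simp at h
  linear_combination h

section Zeta

variable {ι : Type*}

lemma coeff_zeta (c : ℂˣ) (k : ι) (h : LaurentAlg ι) (μ : ι → ℤ) :
    (zeta c k h).coeff μ = ((c ^ (-(μ k)) : ℂˣ) : ℂ) * h.coeff μ := by
  induction h using AddMonoidAlgebra.induction_linear with
  | zero => simp
  | add f g hf hg => simp [hf, hg, mul_add]
  | single ν r =>
    rw [zeta, lift_single]
    show (r • ((c ^ (-(ν k)) : ℂˣ) : ℂ) • mono ν).coeff μ = _
    rcases eq_or_ne ν μ with rfl | hne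
    · simp [mono, mul_comm]
    · simp [mono, hne]

lemma support_zeta (c : ℂˣ) (k : ι) (h : LaurentAlg ι) :
    (zeta c k h).coeff.support = h.coeff.support := by
  ext μ
  simp [coeff_zeta, zpow_ne_zero]

variable {N : Type*} [AddCommMonoid N] [LinearOrder N] [IsOrderedCancelAddMonoid N]

lemma zpow_eq_one_of_mul_eq_zeta_mul (deg : (ι → ℤ) →+ N) {f g : LaurentAlg ι}
    {w ν : ι → ℤ} {s t : ℂˣ} {k l : ι} (hwk : w k = 0) (hfw : f.coeff w ≠ 0)
    (hf : ∀ μ ∈ f.coeff.support, μ ≠ w → deg μ < deg w)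
    (hg : ∀ μ ∈ g.coeff.support, deg μ ≤ deg ν) (hν : ν ∈ g.coeff.support)
    (h : f * g = zeta s k f * zeta t l g) : t ^ (-(ν l)) = 1 := by
  have hunique := UniqueAdd.of_deg_lt_of_deg_le deg hf hg
  have hcoeff := coeff_mul_add_of_uniqueAdd hunique
  rw [← support_zeta s k f, ← support_zeta t l g] at hunique
  rw [h, coeff_mul_add_of_uniqueAdd hunique, coeff_zeta, coeff_zeta, hwk, neg_zero, zpow_zero,
    Units.val_one, one_mul, mul_right_inj' hfw, mul_eq_right₀ (Finsupp.mem_support_iff.mp hν)]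
    at hcoeff
  exact Units.val_eq_one.mp hcoeff

lemma deg_nonpos_of_mul_eq_zeta_mul (deg : (ι → ℤ) →+ N) {f g : LaurentAlg ι}
    {w : ι → ℤ} {s t : ℂˣ} {k l : ι} (ht : ¬IsOfFinOrder t) (hdeg : ∀ ν, ν l = 0 → deg ν = 0)
    (hwk : w k = 0) (hfw : f.coeff w ≠ 0) (hf : ∀ μ ∈ f.coeff.support, μ ≠ w → deg μ < deg w)
    (h : f * g = zeta s k f * zeta t l g) : ∀ μ ∈ g.coeff.support, deg μ ≤ 0 := by
  intro μ hμ
  obtain ⟨ν, hν, hmax⟩ := Finset.exists_max_image g.coeff.support deg ⟨μ, hμ⟩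
  have hνl : ν l = 0 := by
    have := zpow_eq_one_of_mul_eq_zeta_mul deg hwk hfw hf hmax hν h
    simpa using injective_zpow_iff_not_isOfFinOrder.mpr ht (this.trans (zpow_zero t).symm)
  exact hdeg ν hνl ▸ hmax μ hμ

end Zeta

section PhiDecomp

variable {ι : Type*} (a : ι → ι → ℤ) {q : ℂˣ} (k : ι) {φ₀ : LaurentAlg ι}

lemma coeff_phiDecomp_of_ne {μ : ι → ℤ} (h₁ : μ ≠ fun l ↦ a l k) (h₂ : μ ≠ -fun l ↦ a l k) :
    (phiDecomp a q k φ₀).coeff μ = φ₀.coeff μ := by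
  simp [phiDecomp, mono, h₁.symm, h₂.symm]

lemma coeff_phiDecomp_self_ne_zero (hq : ¬IsOfFinOrder q) (hk : a k k ≠ 0)
    (hφ₀ : ∀ μ ∈ φ₀.coeff.support, μ k = 0) :
    (phiDecomp a q k φ₀).coeff (fun l ↦ a l k) ≠ 0 := by
  have hφ₀y : φ₀.coeff (fun l ↦ a l k) = 0 :=
    Finsupp.notMem_support_iff.mp fun h ↦ hk (hφ₀ (fun l ↦ a l k) h)
  have hne := ne_neg_of_apply_ne_zero (μ := fun l ↦ a l k) hk
  simp [phiDecomp, mono, hne, hφ₀y, sub_inv_ne_zero_of_not_isOfFinOrder hq]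

lemma coeff_phiDecomp_neg_self_ne_zero (hq : ¬IsOfFinOrder q) (hk : a k k ≠ 0)
    (hφ₀ : ∀ μ ∈ φ₀.coeff.support, μ k = 0) :
    (phiDecomp a q k φ₀).coeff (-fun l ↦ a l k) ≠ 0 := by
  have hφ₀y : φ₀.coeff (-fun l ↦ a l k) = 0 :=
    Finsupp.notMem_support_iff.mp fun h ↦ hk (by simpa using hφ₀ _ h)
  have hne := ne_neg_of_apply_ne_zero (μ := fun l ↦ a l k) hk
  simp [phiDecomp, mono, hne.symm, hφ₀y, sub_inv_ne_zero_of_not_isOfFinOrder hq]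

lemma eval_eq_zero_of_mem_support_of_phiDecomp {i : ι} (hik : a i k = 0)
    (h : ∀ ν ∈ (phiDecomp a q k φ₀).coeff.support, ν i = 0) :
    ∀ ν ∈ φ₀.coeff.support, ν i = 0 := by
  intro ν hν
  by_cases h₁ : ν = fun l ↦ a l k
  · simp [h₁, hik]
  by_cases h₂ : ν = -fun l ↦ a l k
  · simp [h₂, hik]
  rw [Finsupp.mem_support_iff, ← coeff_phiDecomp_of_ne a k h₁ h₂ (q := q)] at hν
  exact h ν (Finsupp.mem_support_iff.mpr hν)

end PhiDecomp

theorem eval_eq_zero_of_mem_support_of_phiDecomp_mul_eq {ι : Type*} {a : ι → ι → ℤ} {i j : ι}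
    (hii : a i i = 2) (hji : a j i = 0) (hij : a i j = 0) {qi : ℂˣ} (qj : ℂˣ)
    (hqi : ¬IsOfFinOrder qi) {φi0 : LaurentAlg ι} (φj0 : LaurentAlg ι)
    (hi0 : ∀ μ ∈ φi0.coeff.support, μ i = 0)
    (hprod : phiDecomp a qi i φi0 * phiDecomp a qj j φj0 =
      zeta qj⁻¹ j (phiDecomp a qi i φi0) * zeta qi⁻¹ i (phiDecomp a qj j φj0)) :
    ∀ ν ∈ φj0.coeff.support, ν i = 0 := by
  have hsupp : ∀ μ ∈ (phiDecomp a qi i φi0).coeff.support,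
      μ = (fun l ↦ a l i) ∨ μ i = 0 ∨ μ = -fun l ↦ a l i := by
    intro μ hμ
    by_contra! h
    rw [Finsupp.mem_support_iff, coeff_phiDecomp_of_ne a i h.1 h.2.2] at hμ
    exact h.2.1 (hi0 μ (Finsupp.mem_support_iff.mpr hμ))
  have htop : ∀ μ ∈ (phiDecomp a qi i φi0).coeff.support, μ ≠ (fun l ↦ a l i) → μ i < a i i := by
    intro μ hμ hne
    rcases hsupp μ hμ with rfl | h | rfl
    · exact absurd rfl hne
    · omega
    · simp only [Pi.neg_apply]; omega
  have hbot : ∀ μ ∈ (phiDecomp a qi i φi0).coeff.support, μ ≠ (-fun l ↦ a l i) → -μ i < a i i := by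
    intro μ hμ hne
    rcases hsupp μ hμ with rfl | h | rfl
    · dsimp only; omega
    · omega
    · exact absurd rfl hne
  have hqi' : ¬IsOfFinOrder qi⁻¹ := by rwa [isOfFinOrder_inv_iff]
  have hle := deg_nonpos_of_mul_eq_zeta_mul (k := j) (l := i) (Pi.evalAddMonoidHom _ i) hqi'
    (fun _ h ↦ h) hji (coeff_phiDecomp_self_ne_zero a i hqi (by omega) hi0) htop hprod
  have hge := deg_nonpos_of_mul_eq_zeta_mul (k := j) (l := i) (-Pi.evalAddMonoidHom _ i) hqi'
    (by simp) (by simp [hji]) (coeff_phiDecomp_neg_self_ne_zero a i hqi (by omega) hi0)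
    (fun μ hμ hne ↦ by simpa using hbot μ hμ hne) hprod
  refine eval_eq_zero_of_mem_support_of_phiDecomp a j (q := qj) hij fun ν hν ↦ ?_
  have h₁ := hle ν hν
  have h₂ := hge ν hν
  simp only [AddMonoidHom.neg_apply, Pi.evalAddMonoidHom_apply, Left.neg_nonpos_iff] at h₁ h₂
  omega

theorem disconnected_constant_terms_general {ι : Type*}
    (a : ι → ι → ℤ)
    (hdiag : ∀ k, a k k = 2)
    (hzero_iff : ∀ k l, a k l = 0 ↔ a l k = 0)
    (i j : ι) (hija : a i j = 0)
    (qi qj : ℂˣ) (hqi : ∀ m : ℕ, 0 < m → qi ^ m ≠ 1) (hqj : ∀ m : ℕ, 0 < m → qj ^ m ≠ 1)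
    (φi0 φj0 : LaurentAlg ι)
    (hi0 : ∀ μ ∈ φi0.coeff.support, μ i = 0) (hj0 : ∀ μ ∈ φj0.coeff.support, μ j = 0)
    (hprod : phiDecomp a qi i φi0 * phiDecomp a qj j φj0 =
      zeta qj⁻¹ j (phiDecomp a qi i φi0) * zeta qi⁻¹ i (phiDecomp a qj j φj0)) :
    (∀ μ ∈ φi0.coeff.support, μ i = 0 ∧ μ j = 0) ∧
      (∀ μ ∈ φj0.coeff.support, μ i = 0 ∧ μ j = 0) := by
  have hqi' : ¬IsOfFinOrder qi := fun h ↦ let ⟨m, hm, h⟩ := h.exists_pow_eq_one; hqi m hm h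
  have hqj' : ¬IsOfFinOrder qj := fun h ↦ let ⟨m, hm, h⟩ := h.exists_pow_eq_one; hqj m hm h
  have haji : a j i = 0 := (hzero_iff i j).mp hija
  have hj0i := eval_eq_zero_of_mem_support_of_phiDecomp_mul_eq (hdiag i) haji hija qj hqi' φj0 hi0
    hprod
  have hi0j := eval_eq_zero_of_mem_support_of_phiDecomp_mul_eq (hdiag j) hija haji qi hqj' φi0 hj0
    (by rw [mul_comm, hprod, mul_comm])
  exact ⟨fun μ hμ ↦ ⟨hi0 μ hμ, hi0j μ hμ⟩, fun μ hμ ↦ ⟨hj0i μ hμ, hj0 μ hμ⟩⟩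

/-- Lemma A.2: for a generalized Cartan matrix with `a_{ij} = 0` (`i ≠ j`),
if `φ_i = β_i⁺y_i + φ_{i,0} + β_i⁻y_i⁻¹` with `φ_{i,0} ∈ 𝒜_{x_i}`, similarly for `φ_j`,
and `φ_iφ_j = ζ_j⁻¹(φ_i)·ζ_i⁻¹(φ_j)`, then `φ_{i,0}, φ_{j,0} ∈ 𝒜_{x_i} ∩ 𝒜_{x_j}`. -/
theorem disconnected_constant_terms {ι : Type*} [Fintype ι] [DecidableEq ι]
    (a : ι → ι → ℤ)
    (hdiag : ∀ k, a k k = 2) (hoff : ∀ k l, k ≠ l → a k l ≤ 0)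
    (hzero_iff : ∀ k l, a k l = 0 ↔ a l k = 0)
    (i j : ι) (hij : i ≠ j) (hija : a i j = 0)
    (qi qj : ℂˣ) (hqi : ∀ m : ℕ, 0 < m → qi ^ m ≠ 1) (hqj : ∀ m : ℕ, 0 < m → qj ^ m ≠ 1)
    (φi0 φj0 : LaurentAlg ι)
    (hi0 : ∀ μ ∈ φi0.coeff.support, μ i = 0) (hj0 : ∀ μ ∈ φj0.coeff.support, μ j = 0)
    (hprod : phiDecomp a qi i φi0 * phiDecomp a qj j φj0 =
      zeta qj⁻¹ j (phiDecomp a qi i φi0) * zeta qi⁻¹ i (phiDecomp a qj j φj0)) :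
    (∀ μ ∈ φi0.coeff.support, μ i = 0 ∧ μ j = 0) ∧
      (∀ μ ∈ φj0.coeff.support, μ i = 0 ∧ μ j = 0) :=
  disconnected_constant_terms_general a hdiag hzero_iff i j hija qi qj hqi hqj φi0 φj0 hi0 hj0 hprod

end
end
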